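/- For every n ≥ 3 and every s with 1 ≤ s ≤ n−1, the map that sends each graph s-overlap cycle G for the permutation graphs on {1,…,n} (a cyclically ordered graph on vertex set Z_(n!(n−s)), in which every edge lies inside some n-window starting at a position congruent to 1 mod (n−s), and such that every permutation graph on {1,…,n} is order-isomorphic to exactly one n-window starting at a position congruent to 1 mod (n−s)) to the sequence (π_i)_{i ∈ Z_(n!)}, where π_i is the unique permutation whose permutation graph is order-isomorphic to the n-window of G starting at position 1+(i−1)(n−s), is a bijection onto the set of cyclic sequences (π_i)_{i ∈ Z_(n!)} that list every permutation of {1,…,n} exactly once and in which every consecutive pair (π_i, π_{i+1}) overlaps by s. (Such cyclic sequences are exactly the Euler tours of the clustered graph of s-overlapping n-permutations.) -/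

import Mathlib

/-!
The `k`-th window of a graph overlap cycle is the permutation graph of the `k`-th permutation of
the corresponding tour. Reading a tour off a cycle works because a permutation is determined by
its permutation graph (its inversions), and consecutive windows share `s` vertices, which is the
overlap condition. Conversely, a tour `p` yields the graph whose edges are those of its windows.
This is well defined: if two vertices lie in the windows `k` and `k'`, at offsets `x, y` and
`x', y'`, then, as `n!(n-s) ≥ 2n` for `n ≥ 3`, we must have `x - x' = y - y' = j(n-s)` with
`k' = k + j`, and `j` applications of the overlap condition show that `p k` and `p k'` order the
two vertices in the same way. Since every edge of a cycle lies in a window, a cycle is determined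
by its windows, so the two constructions are mutually inverse.
-/

namespace Stmt14

/-- The permutation graph of `π`: vertices `i < j` are adjacent iff `π i > π j`. -/
def permGraph {n : ℕ} (π : Equiv.Perm (Fin n)) : SimpleGraph (Fin n) where
  Adj i j := (i < j ∧ π j < π i) ∨ (j < i ∧ π i < π j)
  symm := ⟨by intro i j h; tauto⟩
  loopless := ⟨by intro i h; rcases h with ⟨h, _⟩ | ⟨h, _⟩ <;> exact absurd h (lt_irrefl i)⟩

/-- The pair of permutations `(σ, τ)` overlaps by `s`. -/
def POverlap (n s : ℕ) (σ τ : Equiv.Perm (Fin n)) : Prop :=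
  ∀ i j : ℕ, ∀ _hi : n - s ≤ i, ∀ _hij : i < j, ∀ hj : j < n,
    (σ ⟨i, by omega⟩ < σ ⟨j, hj⟩ ↔
     τ ⟨i - (n - s), by omega⟩ < τ ⟨j - (n - s), by omega⟩)

/-- The `n`-window of the cyclically ordered graph `G` on `Z_N` starting at position
`i : ℕ` (read cyclically). -/
def cwindow {N : ℕ} (G : SimpleGraph (Fin N)) (i : ℕ) (n : ℕ) : SimpleGraph (Fin n) where
  Adj a b := ∃ (ha : (i + a.val) % N < N) (hb : (i + b.val) % N < N),
    G.Adj ⟨(i + a.val) % N, ha⟩ ⟨(i + b.val) % N, hb⟩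
  symm := ⟨by rintro a b ⟨ha, hb, h⟩; exact ⟨hb, ha, h.symm⟩⟩
  loopless := ⟨by rintro a ⟨ha, hb, h⟩; exact G.irrefl h⟩

/-- A graph `s`-overlap cycle for the permutation graphs on `{1,…,n}`: a cyclically
ordered graph on `Z_(n!(n−s))` in which every edge lies inside some `n`-window starting
at a position divisible by `n−s`, and every permutation graph is order-isomorphic to
(i.e. equals) exactly one such `n`-window. -/
def IsPermGocycle (n s : ℕ) (G : SimpleGraph (Fin (Nat.factorial n * (n - s)))) : Prop :=
  (∀ a b : Fin (Nat.factorial n * (n - s)), G.Adj a b →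
    ∃ (k : Fin (Nat.factorial n)) (x y : Fin n),
      a.val = (k.val * (n - s) + x.val) % (Nat.factorial n * (n - s)) ∧
      b.val = (k.val * (n - s) + y.val) % (Nat.factorial n * (n - s))) ∧
  ∀ π : Equiv.Perm (Fin n), ∃! k : Fin (Nat.factorial n),
    cwindow G (k.val * (n - s)) n = permGraph π

/-- An Euler tour of the clustered graph of `s`-overlapping `n`-permutations: a cyclic
sequence listing every permutation exactly once in which every consecutive pair
overlaps by `s`. -/
def IsPermTourS (n s : ℕ) (p : Fin (Nat.factorial n) → Equiv.Perm (Fin n)) : Prop :=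
  Function.Bijective p ∧
  ∀ i : Fin (Nat.factorial n),
    POverlap n s (p i) (p ⟨(i.val + 1) % Nat.factorial n, Nat.mod_lt _ i.pos⟩)

open scoped Nat

theorem _root_.Equiv.Perm.ext_of_lt_iff {α : Type*} [LinearOrder α] [Finite α]
    {σ τ : Equiv.Perm α} (h : ∀ ⦃i j⦄, i < j → (σ i < σ j ↔ τ i < τ j)) : σ = τ := by
  have hmono : StrictMono (σ ∘ τ.symm) := fun a b hab => by
    obtain ⟨i, rfl⟩ := τ.surjective a
    obtain ⟨j, rfl⟩ := τ.surjective b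
    simp only [Function.comp_apply, Equiv.symm_apply_apply]
    rcases lt_trichotomy i j with hij | rfl | hji
    · exact (h hij).2 hab
    · exact absurd hab (lt_irrefl _)
    · exact (σ.injective.ne hji.ne').lt_or_gt.resolve_right fun h' => lt_asymm hab ((h hji).1 h')
  ext i
  simpa using hmono.apply_eq (x := τ i)

section permGraph

variable {n : ℕ}

theorem permGraph_adj_of_lt (σ : Equiv.Perm (Fin n)) {i j : Fin n} (h : i < j) :
    (permGraph σ).Adj i j ↔ σ j < σ i := by
  simp [permGraph, h, lt_asymm h]

theorem permGraph_not_adj_of_lt (σ : Equiv.Perm (Fin n)) {i j : Fin n} (h : i < j) :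
    ¬ (permGraph σ).Adj i j ↔ σ i < σ j := by
  rw [permGraph_adj_of_lt σ h, not_lt, (σ.injective.ne h.ne).le_iff_lt]

theorem permGraph_injective : Function.Injective (permGraph (n := n)) := fun σ τ h =>
  Equiv.Perm.ext_of_lt_iff fun _ _ hij => by
    rw [← permGraph_not_adj_of_lt σ hij, ← permGraph_not_adj_of_lt τ hij, h]

end permGraph

theorem POverlap.adj_iff {n s : ℕ} {σ τ : Equiv.Perm (Fin n)} (h : POverlap n s σ τ)
    {x y x' y' : Fin n} (hx : x.val = x'.val + (n - s)) (hy : y.val = y'.val + (n - s)) :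
    (permGraph σ).Adj x y ↔ (permGraph τ).Adj x' y' := by
  have of_lt {x y x' y' : Fin n} (hx : x.val = x'.val + (n - s))
      (hy : y.val = y'.val + (n - s)) (hxy : x < y) :
      (permGraph σ).Adj x y ↔ (permGraph τ).Adj x' y' := by
    rw [← not_iff_not, permGraph_not_adj_of_lt σ hxy,
      permGraph_not_adj_of_lt τ (Fin.lt_def.2 (by omega : x'.val < y'.val))]
    convert h x y (by omega) hxy y.isLt using 3 <;> ext <;> simp <;> omega
  rcases lt_trichotomy x y with hxy | rfl | hyx
  · exact of_lt hx hy hxy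
  · obtain rfl : x' = y' := Fin.ext (by omega)
    simp
  · rw [SimpleGraph.adj_comm, of_lt hy hx hyx, SimpleGraph.adj_comm]

section cwindow

variable {N : ℕ} (G : SimpleGraph (Fin N)) {n : ℕ}

theorem cwindow_adj_iff {i : ℕ} {a b : Fin n} {u v : Fin N} (hu : u.val = (i + a) % N)
    (hv : v.val = (i + b) % N) : (cwindow G i n).Adj a b ↔ G.Adj u v := by
  obtain ⟨u, _⟩ := u
  obtain ⟨v, _⟩ := v
  simp only at hu hv
  subst hu hv
  exact ⟨fun ⟨_, _, h⟩ => h, fun h => ⟨_, _, h⟩⟩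

theorem cwindow_adj_congr {i i' : ℕ} {a b a' b' : Fin n} (ha : (i + a) % N = (i' + a') % N)
    (hb : (i + b) % N = (i' + b') % N) :
    (cwindow G i n).Adj a b ↔ (cwindow G i' n).Adj a' b' := by
  constructor
  · rintro ⟨_, _, h⟩
    exact (cwindow_adj_iff G ha hb).2 h
  · rintro ⟨_, _, h⟩
    exact (cwindow_adj_iff G ha.symm hb.symm).2 h

end cwindow

theorem pOverlap_of_cwindow {n s M k : ℕ} {G : SimpleGraph (Fin (M * (n - s)))}
    {σ τ : Equiv.Perm (Fin n)} (hσ : permGraph σ = cwindow G (k * (n - s)) n)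
    (hτ : permGraph τ = cwindow G ((k + 1) % M * (n - s)) n) : POverlap n s σ τ := by
  have shift {u : ℕ} (hu : n - s ≤ u) : (k * (n - s) + u) % (M * (n - s)) =
      ((k + 1) % M * (n - s) + (u - (n - s))) % (M * (n - s)) := by
    rw [← Nat.mul_mod_mul_right, Nat.mod_add_mod, add_mul, one_mul, add_assoc,
      Nat.add_sub_cancel' hu]
  intro i j hi hij hj
  rw [← permGraph_not_adj_of_lt σ (Fin.mk_lt_mk.2 hij),
    ← permGraph_not_adj_of_lt τ (Fin.mk_lt_mk.2 (by omega)), hσ, hτ, not_iff_not]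
  exact cwindow_adj_congr G (shift hi) (shift (hi.trans hij.le))

theorem exists_tour_of_isPermGocycle {n s : ℕ} {G : SimpleGraph (Fin (n ! * (n - s)))}
    (hG : IsPermGocycle n s G) : ∃ p : {p // IsPermTourS n s p},
      ∀ k : Fin n !, permGraph (p.val k) = cwindow G (k.val * (n - s)) n := by
  choose f hf using fun π => (hG.2 π).exists
  have hf_inj : Function.Injective f := fun π π' h =>
    permGraph_injective (by rw [← hf π, ← hf π', h])
  let e := Equiv.ofBijective f
    ((Fintype.bijective_iff_injective_and_card f).2 ⟨hf_inj, by simp [Fintype.card_perm]⟩)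
  have hwin (k : Fin n !) : permGraph (e.symm k) = cwindow G (k.val * (n - s)) n := by
    rw [← hf, show f (e.symm k) = k from e.apply_symm_apply k]
  exact ⟨⟨e.symm, e.symm.bijective, fun k => pOverlap_of_cwindow (hwin k) (hwin _)⟩, hwin⟩

theorem _root_.Nat.exists_shift_of_modEq {M d n k k' x y x' y' : ℕ} (h2n : 2 * n ≤ M * d)
    (hk' : k' < M) (hxx : x' ≤ x) (hx : x < n) (hy : y < n) (hy' : y' < n)
    (hxm : k * d + x ≡ k' * d + x' [MOD M * d]) (hym : k * d + y ≡ k' * d + y' [MOD M * d]) :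
    ∃ j, x = x' + j * d ∧ y = y' + j * d ∧ k' = (k + j) % M := by
  obtain ⟨t, rfl⟩ := Nat.exists_eq_add_of_le hxx
  have ht : k * d + t ≡ k' * d [MOD M * d] :=
    Nat.ModEq.add_right_cancel' x' (by convert hxm using 1; ring)
  have hyt : y = t + y' := by
    have : k * d + y ≡ k * d + (t + y') [MOD M * d] :=
      hym.trans (by convert (ht.add_right y').symm using 1; ring)
    exact (Nat.ModEq.add_left_cancel' _ this).eq_of_lt_of_lt (by omega) (by omega)
  obtain ⟨j, rfl⟩ : d ∣ t := by
    have := ht.of_mul_left M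
    simpa [Nat.ModEq, Nat.add_mod, Nat.dvd_iff_mod_eq_zero] using this
  have hd : d ≠ 0 := by rintro rfl; omega
  have hkj : (k + j) * d ≡ k' * d [MOD M * d] := by convert ht using 1; ring
  exact ⟨j, by ring, by rw [hyt]; ring,
    (Nat.mod_eq_of_lt hk').symm.trans (Nat.ModEq.mul_right_cancel' hd hkj).symm⟩

theorem _root_.Nat.two_mul_le_factorial {n : ℕ} (hn : 3 ≤ n) : 2 * n ≤ n ! :=
  calc 2 * n ≤ (n - 1)! * n :=
        Nat.mul_le_mul_right n ((by omega : 2 ≤ n - 1).trans (Nat.self_le_factorial _))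
    _ = n ! := by rw [mul_comm, Nat.mul_factorial_pred (by omega)]

namespace IsPermTourS

variable {n s : ℕ} {p : Fin n ! → Equiv.Perm (Fin n)}

theorem adj_iff_of_succ (hp : IsPermTourS n s p) {k k' : Fin n !}
    (hk : k'.val = (k.val + 1) % n !) {x y x' y' : Fin n} (hx : x.val = x'.val + (n - s))
    (hy : y.val = y'.val + (n - s)) :
    (permGraph (p k)).Adj x y ↔ (permGraph (p k')).Adj x' y' := by
  obtain rfl : k' = ⟨(k.val + 1) % n !, Nat.mod_lt _ k.pos⟩ := Fin.ext hk
  exact (hp.2 k).adj_iff hx hy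

theorem adj_iff_of_shift (hp : IsPermTourS n s p) (j : ℕ) {k k' : Fin n !}
    (hk : k'.val = (k.val + j) % n !) {x y x' y' : Fin n} (hx : x.val = x'.val + j * (n - s))
    (hy : y.val = y'.val + j * (n - s)) :
    (permGraph (p k)).Adj x y ↔ (permGraph (p k')).Adj x' y' := by
  induction j generalizing k' x' y' with
  | zero =>
    obtain rfl : k' = k := Fin.ext (by simpa [Nat.mod_eq_of_lt k.isLt] using hk)
    obtain rfl : x' = x := Fin.ext (by simpa using hx.symm)
    obtain rfl : y' = y := Fin.ext (by simpa using hy.symm)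
    rfl
  | succ j ih =>
    rw [Nat.succ_mul] at hx hy
    refine (ih (k' := ⟨(k.val + j) % n !, Nat.mod_lt _ k.pos⟩) rfl
      (x' := ⟨x'.val + (n - s), by omega⟩) (y' := ⟨y'.val + (n - s), by omega⟩)
      (by simp only; omega) (by simp only; omega)).trans
      (hp.adj_iff_of_succ (by simp [hk, add_assoc]) rfl rfl)

theorem adj_iff_of_modEq (hp : IsPermTourS n s p) (h2n : 2 * n ≤ n ! * (n - s))
    {k k' : Fin n !} {x y x' y' : Fin n}
    (hx : k.val * (n - s) + x ≡ k'.val * (n - s) + x' [MOD n ! * (n - s)])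
    (hy : k.val * (n - s) + y ≡ k'.val * (n - s) + y' [MOD n ! * (n - s)]) :
    (permGraph (p k)).Adj x y ↔ (permGraph (p k')).Adj x' y' := by
  wlog hxx : x' ≤ x generalizing k k' x y x' y'
  · exact (this hx.symm hy.symm (le_of_not_ge hxx)).symm
  obtain ⟨j, hxj, hyj, hkj⟩ :=
    Nat.exists_shift_of_modEq h2n k'.isLt hxx x.isLt y.isLt y'.isLt hx hy
  exact hp.adj_iff_of_shift j hkj hxj hyj

end IsPermTourS

def tourGraph (n s : ℕ) (p : Fin n ! → Equiv.Perm (Fin n)) :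
    SimpleGraph (Fin (n ! * (n - s))) where
  Adj a b := a ≠ b ∧ ∃ (k : Fin n !) (x y : Fin n),
    a.val = (k.val * (n - s) + x.val) % (n ! * (n - s)) ∧
    b.val = (k.val * (n - s) + y.val) % (n ! * (n - s)) ∧ (permGraph (p k)).Adj x y
  symm := ⟨fun _ _ ⟨hne, k, x, y, ha, hb, h⟩ => ⟨hne.symm, k, y, x, hb, ha, h.symm⟩⟩
  loopless := ⟨fun _ h => h.1 rfl⟩

section tourGraph

variable {n s : ℕ} {p : Fin n ! → Equiv.Perm (Fin n)}

theorem cwindow_tourGraph (hp : IsPermTourS n s p) (h2n : 2 * n ≤ n ! * (n - s)) (k : Fin n !) :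
    cwindow (tourGraph n s p) (k.val * (n - s)) n = permGraph (p k) := by
  ext x y
  have hN : 0 < n ! * (n - s) := by have := x.isLt; omega
  rw [cwindow_adj_iff _ (u := ⟨_, Nat.mod_lt _ hN⟩) (v := ⟨_, Nat.mod_lt _ hN⟩) rfl rfl]
  constructor
  · rintro ⟨-, k', x', y', hx, hy, h⟩
    exact (hp.adj_iff_of_modEq h2n hx hy).2 h
  · refine fun h => ⟨fun he => h.ne (Fin.ext ?_), k, x, y, rfl, rfl, h⟩
    exact (Nat.ModEq.add_left_cancel' _ (Fin.ext_iff.1 he)).eq_of_lt_of_lt (by omega) (by omega)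

theorem isPermGocycle_tourGraph (hp : IsPermTourS n s p) (h2n : 2 * n ≤ n ! * (n - s)) :
    IsPermGocycle n s (tourGraph n s p) := by
  refine ⟨fun _ _ ⟨_, k, x, y, ha, hb, _⟩ => ⟨k, x, y, ha, hb⟩, fun π => ?_⟩
  obtain ⟨k, rfl⟩ := hp.1.2 π
  refine ⟨k, cwindow_tourGraph hp h2n k, fun k' hk' => hp.1.1 (permGraph_injective ?_)⟩
  rw [← cwindow_tourGraph hp h2n k', hk']

end tourGraph

theorem le_of_cwindow_eq {M d n : ℕ} {G G' : SimpleGraph (Fin (M * d))}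
    (hG : ∀ a b, G.Adj a b → ∃ (k : Fin M) (x y : Fin n),
      a.val = (k.val * d + x.val) % (M * d) ∧ b.val = (k.val * d + y.val) % (M * d))
    (h : ∀ k : Fin M, cwindow G (k.val * d) n = cwindow G' (k.val * d) n) : G ≤ G' := by
  intro a b hab
  obtain ⟨k, x, y, ha, hb⟩ := hG a b hab
  rw [← cwindow_adj_iff G' ha hb, ← h k, cwindow_adj_iff G ha hb]
  exact hab

theorem perm_gocycle_tour_bijection_general (n s : ℕ) (hn : 3 ≤ n)
    (hs2 : s ≤ n - 1) :
    ∃ F : {G : SimpleGraph (Fin (Nat.factorial n * (n - s))) // IsPermGocycle n s G} →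
          {p : Fin (Nat.factorial n) → Equiv.Perm (Fin n) // IsPermTourS n s p},
      Function.Bijective F ∧
      ∀ (G : {G : SimpleGraph (Fin (Nat.factorial n * (n - s))) // IsPermGocycle n s G})
        (k : Fin (Nat.factorial n)),
        permGraph ((F G).val k) = cwindow G.val (k.val * (n - s)) n := by
  have h2n : 2 * n ≤ n ! * (n - s) :=
    (Nat.two_mul_le_factorial hn).trans (Nat.le_mul_of_pos_right _ (by omega))
  choose F hF using fun G : {G // IsPermGocycle n s G} => exists_tour_of_isPermGocycle G.2
  refine ⟨F, ⟨fun G G' hGG' => ?_, fun q => ?_⟩, hF⟩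
  · have hw (k : Fin n !) :
        cwindow G.1 (k.val * (n - s)) n = cwindow G'.1 (k.val * (n - s)) n := by
      rw [← hF, ← hF, hGG']
    exact Subtype.ext <| le_antisymm (le_of_cwindow_eq G.2.1 hw)
      (le_of_cwindow_eq G'.2.1 fun k => (hw k).symm)
  · let G : {G // IsPermGocycle n s G} := ⟨tourGraph n s q, isPermGocycle_tourGraph q.2 h2n⟩
    refine ⟨G, Subtype.ext <| funext fun k => permGraph_injective ?_⟩
    rw [hF, cwindow_tourGraph q.2 h2n]

/-- for `n ≥ 3` and `1 ≤ s ≤ n−1`, the map reading off the permutations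
from the relevant `n`-windows is a bijection from the set of graph `s`-overlap cycles
for permutation graphs on `{1,…,n}` onto the set of Euler tours of the clustered graph
of `s`-overlapping `n`-permutations, preserving the order in which `S_n` is covered. -/
theorem perm_gocycle_tour_bijection (n s : ℕ) (hn : 3 ≤ n)
    (hs1 : 1 ≤ s) (hs2 : s ≤ n - 1) :
    ∃ F : {G : SimpleGraph (Fin (Nat.factorial n * (n - s))) // IsPermGocycle n s G} →
          {p : Fin (Nat.factorial n) → Equiv.Perm (Fin n) // IsPermTourS n s p},
      Function.Bijective F ∧
      ∀ (G : {G : SimpleGraph (Fin (Nat.factorial n * (n - s))) // IsPermGocycle n s G})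
        (k : Fin (Nat.factorial n)),
        permGraph ((F G).val k) = cwindow G.val (k.val * (n - s)) n :=
  perm_gocycle_tour_bijection_general n s hn hs2

end Stmt14
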